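/- Let n ≥ 1 and let p = (p_n, p_n', q_n, …, p_1, p_1', q_1) ∈ I_n and t = (t_n, t_n', u_n, …, t_1, t_1', u_1) ∈ I_n satisfy p_i + p_i' = t_i + t_i' and q_i = u_i for all i ∈ {1,…,n}. If (p_n, p_{n−1}, …, p_1) strictly precedes (t_n, t_{n−1}, …, t_1) in the lexicographic order on ℕ₀^n, then s_p < s_t. -/

import Mathlib

open Matrix

noncomputable section

/-- `M1 = [[1,1,0],[0,1,0],[0,0,1]]`. -/
def M1 : Matrix (Fin 3) (Fin 3) ℝ := !![1, 1, 0; 0, 1, 0; 0, 0, 1]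

/-- `M2 = [[1,0,0],[1,1,1],[0,0,1]]`. -/
def M2 : Matrix (Fin 3) (Fin 3) ℝ := !![1, 0, 0; 1, 1, 1; 0, 0, 1]

/-- `M3 = [[1,0,0],[0,1,0],[0,1,1]]`. -/
def M3 : Matrix (Fin 3) (Fin 3) ℝ := !![1, 0, 0; 0, 1, 0; 0, 1, 1]

/- A tuple `p = (p_n, p_n', q_n, …, p_1, p_1', q_1) ∈ ℕ₀^{3n}` is encoded by three
functions `P P' Q : Fin n → ℕ`, where the index `i : Fin n` corresponds to the
subscript `i + 1` (so `P ⟨0,_⟩ = p_1`, …, `P ⟨n-1,_⟩ = p_n`). -/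

/-- The transition matrix `M_p = M1^{p_n} M3^{p_n'} M2^{q_n} ⋯ M1^{p_1} M3^{p_1'} M2^{q_1}`. -/
def Mp (n : ℕ) (P P' Q : Fin n → ℕ) : Matrix (Fin 3) (Fin 3) ℝ :=
  ((List.finRange n).map fun i => M1 ^ P i.rev * M3 ^ P' i.rev * M2 ^ Q i.rev).prod

/-- Membership of the tuple `p` in `I_n`. -/
def memI (n : ℕ) (P P' Q : Fin n → ℕ) : Prop :=
  (∀ i, 0 < Q i) ∧ (∀ i, 0 < P i + P' i) ∧ (∃ j, 0 < P j) ∧ (∃ k, 0 < P' k)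

/-- Finite continued fraction: `cf [a₁, …, a_m] x = 1/(a₁ + 1/(a₂ + ⋯ + 1/(a_m + x)))`. -/
def cf (l : List ℕ) (x : ℝ) : ℝ := l.foldr (fun a y => 1 / (a + y)) x

/-- The (0-indexed) block index `k(j+1) - 1 = n - 1 - (j mod n)` used at step `j + 1`. -/
def blk (n : ℕ) (hn : 0 < n) (j : ℕ) : Fin n :=
  ⟨n - 1 - j % n, lt_of_le_of_lt (Nat.sub_le _ _) (Nat.sub_lt hn one_pos)⟩

/-- The sequence `(a₁, …, a_{2n}) = (p_n + p_n', q_n, …, p_1 + p_1', q_1)` as a list. -/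
def aList (n : ℕ) (hn : 0 < n) (P P' Q : Fin n → ℕ) : List ℕ :=
  (List.range n).flatMap fun i => [P (blk n hn i) + P' (blk n hn i), Q (blk n hn i)]

/-- `isH0 n hn P P' Q h0` says that `h0` is the number `h_{p,0}`: a real number in `(0,1)`
that is a fixed point of `x ↦ 1/(a₁ + 1/(a₂ + ⋯ + 1/(a_{2n} + x)))` (there is exactly one). -/
def isH0 (n : ℕ) (hn : 0 < n) (P P' Q : Fin n → ℕ) (h0 : ℝ) : Prop :=
  h0 ∈ Set.Ioo (0 : ℝ) 1 ∧ cf (aList n hn P P' Q) h0 = h0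

/-- The pair `(w_{p,j}, h_{p,j})`, with `w_{p,0} = 1`, `h_{p,0} = h0`, and for `j ≥ 1`:
`w_{p,j} = w_{p,j-1} − (p_{k(j)} + p'_{k(j)}) h_{p,j-1}`, `h_{p,j} = h_{p,j-1} − q_{k(j)} w_{p,j}`. -/
def wh (n : ℕ) (hn : 0 < n) (P P' Q : Fin n → ℕ) (h0 : ℝ) : ℕ → ℝ × ℝ
  | 0 => (1, h0)
  | j + 1 =>
    let prev := wh n hn P P' Q h0 j
    let b := blk n hn j
    let w := prev.1 - ((P b : ℝ) + (P' b : ℝ)) * prev.2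
    (w, prev.2 - (Q b : ℝ) * w)

/-- The width `w_{p,j}`. -/
def wseq (n : ℕ) (hn : 0 < n) (P P' Q : Fin n → ℕ) (h0 : ℝ) (j : ℕ) : ℝ :=
  (wh n hn P P' Q h0 j).1

/-- The height `h_{p,j}`. -/
def hseq (n : ℕ) (hn : 0 < n) (P P' Q : Fin n → ℕ) (h0 : ℝ) (j : ℕ) : ℝ :=
  (wh n hn P P' Q h0 j).2

/-- The split ratio `s_p = Σ_{i=0}^∞ p_{k(i+1)} h_{p,i}`. -/
def splitRatio (n : ℕ) (hn : 0 < n) (P P' Q : Fin n → ℕ) (h0 : ℝ) : ℝ :=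
  ∑' i : ℕ, (P (blk n hn i) : ℝ) * hseq n hn P P' Q h0 i

/-- The reindexing realizing the shift `T`: the tuple `T(p)` is given by the functions
`P ∘ shiftIdx n hn`, `P' ∘ shiftIdx n hn`, `Q ∘ shiftIdx n hn`. -/
def shiftIdx (n : ℕ) (hn : 0 < n) (i : Fin n) : Fin n :=
  ⟨(i.val + (n - 1)) % n, Nat.mod_lt _ hn⟩


/-!
The heights `h_{p,j}` depend on `p` only through the sums `p_i + p_i'` and the `q_i`: the
recursion only sees those, and `h_{p,0}` is the unique fixed point in `[0, ∞)` of a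
continued-fraction map whose partial quotients are all `≥ 1`, hence a contraction there. So `p`
and `t` have the same heights `h_j`, and `s_p`, `s_t` are series against `h_j` that differ only
in their coefficients.

The ratio `h_{p,j} / w_{p,j}` is a tail of the periodic continued fraction of `h_{p,0}`, so
all widths and heights are positive. The terms `(p_j + p_j') h_{p,j} = w_{p,j} - w_{p,j+1}`
telescope, so for any coefficients `c_i ≤ p_i + p_i'` we get
`Σ_{i > m} c_i h_{p,i} ≤ w_{p,m+1} < h_{p,m}`, the last step because `h_{p,m+1} > 0`. Hence
raising the coefficient at the first position `m` where the sequences differ outweighs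
everything that happens after `m`.
-/

section Telescoping

variable {w a h c : ℕ → ℝ}

theorem sum_range_nat_add_mul_le (hw : ∀ i, w (i + 1) = w i - a i * h i)
    (hw0 : ∀ i, 0 ≤ w i) (hh : ∀ i, 0 ≤ h i) (hca : ∀ i, c i ≤ a i) (k N : ℕ) :
    ∑ i ∈ Finset.range N, c (i + k) * h (i + k) ≤ w k :=
  calc ∑ i ∈ Finset.range N, c (i + k) * h (i + k)
      ≤ ∑ i ∈ Finset.range N, (w (i + k) - w (i + 1 + k)) :=
        Finset.sum_le_sum fun i _ => by
          rw [Nat.add_right_comm, hw]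
          nlinarith [hca (i + k), hh (i + k)]
    _ = w k - w (N + k) := by rw [Finset.sum_range_sub', zero_add]
    _ ≤ w k := sub_le_self _ (hw0 _)

theorem summable_mul_of_telescoping (hw : ∀ i, w (i + 1) = w i - a i * h i)
    (hw0 : ∀ i, 0 ≤ w i) (hh : ∀ i, 0 ≤ h i) (hc0 : ∀ i, 0 ≤ c i) (hca : ∀ i, c i ≤ a i) :
    Summable fun i => c i * h i :=
  summable_of_sum_range_le (fun i => mul_nonneg (hc0 i) (hh i))
    (sum_range_nat_add_mul_le hw hw0 hh hca 0)

theorem tsum_nat_add_mul_le_of_telescoping (hw : ∀ i, w (i + 1) = w i - a i * h i)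
    (hw0 : ∀ i, 0 ≤ w i) (hh : ∀ i, 0 ≤ h i) (hc0 : ∀ i, 0 ≤ c i) (hca : ∀ i, c i ≤ a i)
    (k : ℕ) : ∑' i, c (i + k) * h (i + k) ≤ w k :=
  Real.tsum_le_of_sum_range_le (fun _ => mul_nonneg (hc0 _) (hh _))
    (sum_range_nat_add_mul_le hw hw0 hh hca k)

end Telescoping

theorem tsum_mul_lt_tsum_mul_of_lex {c d h : ℕ → ℝ} {m : ℕ}
    (hc : Summable fun i => c i * h i) (hd : Summable fun i => d i * h i)
    (hd0 : ∀ i, 0 ≤ d i * h i) (hpre : ∀ i < m, c i = d i) (hm : c m + 1 ≤ d m)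
    (hhm : 0 ≤ h m) (htail : ∑' i, c (i + (m + 1)) * h (i + (m + 1)) < h m) :
    ∑' i, c i * h i < ∑' i, d i * h i := by
  have hhead : ∑ i ∈ Finset.range (m + 1), c i * h i + h m
      ≤ ∑ i ∈ Finset.range (m + 1), d i * h i := by
    rw [Finset.sum_range_succ, Finset.sum_range_succ,
      Finset.sum_congr rfl fun i hi => by rw [hpre i (Finset.mem_range.mp hi)]]
    nlinarith
  rw [← hc.sum_add_tsum_nat_add (m + 1)]
  linarith [hd.sum_le_tsum (Finset.range (m + 1)) fun i _ => hd0 i]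

theorem cf_cons (a : ℕ) (l : List ℕ) (x : ℝ) : cf (a :: l) x = 1 / (a + cf l x) := rfl

theorem cf_pos (l : List ℕ) {x : ℝ} (hx : 0 < x) : 0 < cf l x := by
  induction l with
  | nil => exact hx
  | cons a l ih => rw [cf_cons]; positivity

theorem cf_nonneg (l : List ℕ) {x : ℝ} (hx : 0 ≤ x) : 0 ≤ cf l x := by
  induction l with
  | nil => exact hx
  | cons a l ih => rw [cf_cons]; positivity

theorem abs_one_div_add_sub_one_div_add {a u v : ℝ} (hu : 0 < a + u) (hv : 0 < a + v) :
    |1 / (a + u) - 1 / (a + v)| = |u - v| / ((a + u) * (a + v)) := by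
  rw [div_sub_div _ _ hu.ne' hv.ne', abs_div, abs_of_pos (mul_pos hu hv), abs_sub_comm u v]
  ring_nf

theorem cf_abs_sub_le {l : List ℕ} (hl : ∀ a ∈ l, 1 ≤ a) {x y : ℝ} (hx : 0 ≤ x)
    (hy : 0 ≤ y) : |cf l x - cf l y| ≤ |x - y| := by
  induction l with
  | nil => exact le_rfl
  | cons a l ih =>
    have ha : (1 : ℝ) ≤ a := by exact_mod_cast hl a List.mem_cons_self
    have hlx := cf_nonneg l hx
    have hly := cf_nonneg l hy
    rw [cf_cons, cf_cons, abs_one_div_add_sub_one_div_add (by linarith) (by linarith)]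
    exact (div_le_self (abs_nonneg _) (by nlinarith)).trans
      (ih fun b hb => hl b (List.mem_cons_of_mem a hb))

theorem cf_abs_sub_lt {a : ℕ} {l : List ℕ} (hl : ∀ b ∈ a :: l, 1 ≤ b) {x y : ℝ} (hx : 0 ≤ x)
    (hy : 0 ≤ y) (hxy : x ≠ y) : |cf (a :: l) x - cf (a :: l) y| < |x - y| := by
  have ha : (1 : ℝ) ≤ a := by exact_mod_cast hl a List.mem_cons_self
  have hlx := cf_nonneg l hx
  have hly := cf_nonneg l hy
  have hle := cf_abs_sub_le (fun b hb => hl b (List.mem_cons_of_mem a hb)) hx hy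
  rw [cf_cons, cf_cons, abs_one_div_add_sub_one_div_add (by linarith) (by linarith)]
  rcases eq_or_ne (cf l x) (cf l y) with hl_eq | hl_ne
  · rw [hl_eq, sub_self, abs_zero, zero_div]
    exact abs_pos.mpr (sub_ne_zero.mpr hxy)
  · refine lt_of_lt_of_le (div_lt_self (abs_pos.mpr (sub_ne_zero.mpr hl_ne)) ?_) hle
    rcases hl_ne.lt_or_gt with h | h <;> nlinarith

theorem cf_fixedPoint_unique {l : List ℕ} (hl0 : l ≠ []) (hl : ∀ a ∈ l, 1 ≤ a) {x y : ℝ}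
    (hx : 0 ≤ x) (hy : 0 ≤ y) (hfx : cf l x = x) (hfy : cf l y = y) : x = y := by
  obtain ⟨a, l, rfl⟩ := List.exists_cons_of_ne_nil hl0
  by_contra hxy
  have := cf_abs_sub_lt hl hx hy hxy
  rw [hfx, hfy] at this
  exact lt_irrefl _ this

theorem List.drop_two_mul_flatMap_pair {α β : Type*} (f g : α → β) (l : List α) (r : ℕ) :
    (l.flatMap fun i => [f i, g i]).drop (2 * r) = (l.drop r).flatMap fun i => [f i, g i] := by
  induction l generalizing r with
  | nil => simp
  | cons a l ih =>
    cases r with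
    | zero => simp
    | succ r => simpa [Nat.mul_succ] using ih r

section Heights

variable (n : ℕ) (hn : 0 < n) (P P' Q : Fin n → ℕ) (h0 : ℝ)

theorem blk_mod (j : ℕ) : blk n hn (j % n) = blk n hn j := by
  simp [blk]

theorem aList_drop_two_mul {r : ℕ} (hr : r < n) :
    (aList n hn P P' Q).drop (2 * r) =
      (P (blk n hn r) + P' (blk n hn r)) :: Q (blk n hn r) ::
        (aList n hn P P' Q).drop (2 * (r + 1)) := by
  rw [aList, List.drop_two_mul_flatMap_pair, List.drop_two_mul_flatMap_pair,
    List.drop_eq_getElem_cons (by simpa using hr)]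
  simp

theorem aList_drop_two_mul_self : (aList n hn P P' Q).drop (2 * n) = [] := by
  rw [aList, List.drop_two_mul_flatMap_pair, List.drop_eq_nil_of_le (by simp)]
  rfl

theorem aList_ne_nil : aList n hn P P' Q ≠ [] := by
  intro h
  simpa [h] using aList_drop_two_mul n hn P P' Q hn

/-- The ratio `h_{p,j} / w_{p,j}`, as the tail of the periodic continued fraction of `h_{p,0}`
that starts at the block of `j`. -/
def cfTail (j : ℕ) : ℝ := cf ((aList n hn P P' Q).drop (2 * (j % n))) h0

variable {n hn P P' Q h0}

theorem one_le_of_mem_aList (hQ : ∀ i, 0 < Q i) (hPP : ∀ i, 0 < P i + P' i) :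
    ∀ a ∈ aList n hn P P' Q, 1 ≤ a := by
  simp only [aList, List.mem_flatMap, List.mem_cons, List.not_mem_nil, or_false]
  rintro a ⟨i, -, rfl | rfl⟩
  exacts [hPP _, hQ _]

theorem isH0_unique (hQ : ∀ i, 0 < Q i) (hPP : ∀ i, 0 < P i + P' i) {x y : ℝ}
    (hx : isH0 n hn P P' Q x) (hy : isH0 n hn P P' Q y) : x = y :=
  cf_fixedPoint_unique (aList_ne_nil n hn P P' Q) (one_le_of_mem_aList hQ hPP) hx.1.1.le
    hy.1.1.le hx.2 hy.2

theorem cfTail_zero (hfix : cf (aList n hn P P' Q) h0 = h0) : cfTail n hn P P' Q h0 0 = h0 := by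
  simpa [cfTail] using hfix

theorem cfTail_eq (hfix : cf (aList n hn P P' Q) h0 = h0) (j : ℕ) :
    cfTail n hn P P' Q h0 j = 1 / (((P (blk n hn j) + P' (blk n hn j) : ℕ) : ℝ) +
      1 / ((Q (blk n hn j) : ℝ) + cfTail n hn P P' Q h0 (j + 1))) := by
  have hnext : cf ((aList n hn P P' Q).drop (2 * (j % n + 1))) h0 =
      cfTail n hn P P' Q h0 (j + 1) := by
    rw [cfTail, ← Nat.mod_add_mod j n 1]
    rcases Nat.lt_or_ge (j % n + 1) n with hlt | hge
    · rw [Nat.mod_eq_of_lt hlt]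
    · -- at the end of the period the tail is empty, and the fixed point starts over
      rw [le_antisymm (Nat.mod_lt j hn) hge, Nat.mod_self, aList_drop_two_mul_self,
        Nat.mul_zero, List.drop_zero, hfix]
      rfl
  rw [cfTail, aList_drop_two_mul n hn P P' Q (Nat.mod_lt j hn), cf_cons, cf_cons, hnext,
    blk_mod]

theorem cfTail_pos (hh0 : 0 < h0) (j : ℕ) : 0 < cfTail n hn P P' Q h0 j := cf_pos _ hh0

theorem wseq_succ (j : ℕ) : wseq n hn P P' Q h0 (j + 1) =
    wseq n hn P P' Q h0 j - ((P (blk n hn j) : ℝ) + P' (blk n hn j)) * hseq n hn P P' Q h0 j :=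
  rfl

theorem hseq_succ (j : ℕ) : hseq n hn P P' Q h0 (j + 1) =
    hseq n hn P P' Q h0 j - (Q (blk n hn j) : ℝ) * wseq n hn P P' Q h0 (j + 1) :=
  rfl

theorem wseq_pos_and_hseq_eq (hh0 : isH0 n hn P P' Q h0) (j : ℕ) :
    0 < wseq n hn P P' Q h0 j ∧
      hseq n hn P P' Q h0 j = wseq n hn P P' Q h0 j * cfTail n hn P P' Q h0 j := by
  induction j with
  | zero => exact ⟨one_pos, by rw [cfTail_zero hh0.2]; exact (one_mul h0).symm⟩
  | succ j ih =>
    obtain ⟨hw, hh⟩ := ih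
    have hu' : 0 < cfTail n hn P P' Q h0 (j + 1) := cfTail_pos hh0.1.1 _
    have hrec := cfTail_eq hh0.2 j
    push_cast at hrec
    generalize cfTail n hn P P' Q h0 (j + 1) = u' at hu' hrec ⊢
    generalize cfTail n hn P P' Q h0 j = u at hh hrec
    have hw' : wseq n hn P P' Q h0 (j + 1) =
        wseq n hn P P' Q h0 j * u * (1 / (Q (blk n hn j) + u')) := by
      rw [wseq_succ, hh, hrec]
      field_simp
      ring
    refine ⟨?_, ?_⟩
    · rw [hw', hrec]
      positivity
    · rw [hseq_succ, hw', hh, hrec]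
      field_simp
      ring

theorem wseq_pos (hh0 : isH0 n hn P P' Q h0) (j : ℕ) : 0 < wseq n hn P P' Q h0 j :=
  (wseq_pos_and_hseq_eq hh0 j).1

theorem hseq_pos (hh0 : isH0 n hn P P' Q h0) (j : ℕ) : 0 < hseq n hn P P' Q h0 j := by
  rw [(wseq_pos_and_hseq_eq hh0 j).2]
  exact mul_pos (wseq_pos hh0 j) (cfTail_pos hh0.1.1 j)

theorem wseq_succ_lt_hseq (hQ : ∀ i, 0 < Q i) (hh0 : isH0 n hn P P' Q h0) (j : ℕ) :
    wseq n hn P P' Q h0 (j + 1) < hseq n hn P P' Q h0 j := by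
  have hq : (1 : ℝ) ≤ Q (blk n hn j) := by exact_mod_cast hQ (blk n hn j)
  nlinarith [hseq_succ (n := n) (hn := hn) (P := P) (P' := P') (Q := Q) (h0 := h0) j,
    hseq_pos hh0 (j + 1), wseq_pos hh0 (j + 1)]

theorem tsum_mul_hseq_lt_of_lex (hQ : ∀ i, 0 < Q i) (hh0 : isH0 n hn P P' Q h0)
    {c d : ℕ → ℕ} (hc : ∀ i, c i ≤ P (blk n hn i) + P' (blk n hn i))
    (hd : ∀ i, d i ≤ P (blk n hn i) + P' (blk n hn i)) {m : ℕ} (hpre : ∀ i < m, c i = d i)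
    (hm : c m < d m) :
    ∑' i, (c i : ℝ) * hseq n hn P P' Q h0 i < ∑' i, (d i : ℝ) * hseq n hn P P' Q h0 i := by
  have hw i := (wseq_pos hh0 i).le
  have hh i := (hseq_pos hh0 i).le
  have hc' i : (c i : ℝ) ≤ (P (blk n hn i) : ℝ) + P' (blk n hn i) := by exact_mod_cast hc i
  have hd' i : (d i : ℝ) ≤ (P (blk n hn i) : ℝ) + P' (blk n hn i) := by exact_mod_cast hd i
  refine tsum_mul_lt_tsum_mul_of_lex
    (summable_mul_of_telescoping wseq_succ hw hh (fun _ => Nat.cast_nonneg _) hc')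
    (summable_mul_of_telescoping wseq_succ hw hh (fun _ => Nat.cast_nonneg _) hd')
    (fun i => mul_nonneg (Nat.cast_nonneg _) (hh i)) (fun i hi => by rw [hpre i hi])
    (by exact_mod_cast hm) (hh m) ?_
  calc ∑' i, (c (i + (m + 1)) : ℝ) * hseq n hn P P' Q h0 (i + (m + 1))
      ≤ wseq n hn P P' Q h0 (m + 1) :=
        tsum_nat_add_mul_le_of_telescoping wseq_succ hw hh (fun _ => Nat.cast_nonneg _) hc' _
    _ < hseq n hn P P' Q h0 m := wseq_succ_lt_hseq hQ hh0 m

end Heights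

section SameCoefficients

variable {n : ℕ} {hn : 0 < n} {P P' Q R R' U : Fin n → ℕ}

theorem aList_congr (hsum : ∀ i, P i + P' i = R i + R' i) (hq : ∀ i, Q i = U i) :
    aList n hn P P' Q = aList n hn R R' U := by
  simp only [aList, hsum, hq]

theorem hseq_congr (hsum : ∀ i, P i + P' i = R i + R' i) (hq : ∀ i, Q i = U i) (h0 : ℝ) :
    hseq n hn P P' Q h0 = hseq n hn R R' U h0 := by
  have hsum' i : (P i : ℝ) + P' i = R i + R' i := by exact_mod_cast hsum i
  have hwh j : wh n hn P P' Q h0 j = wh n hn R R' U h0 j := by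
    induction j with
    | zero => rfl
    | succ j ih => simp only [wh, ih, hsum', hq]
  funext j
  exact congrArg Prod.snd (hwh j)

end SameCoefficients

theorem stmt11_general (n : ℕ) (hn : 0 < n) (P P' Q R R' U : Fin n → ℕ)
    (hP : memI n P P' Q)
    (hsum : ∀ i, P i + P' i = R i + R' i) (hq : ∀ i, Q i = U i)
    (hlex : ∃ m : ℕ, m < n ∧ (∀ i, i < m → P (blk n hn i) = R (blk n hn i)) ∧
      P (blk n hn m) < R (blk n hn m))
    (h0p h0t : ℝ) (hh0p : isH0 n hn P P' Q h0p) (hh0t : isH0 n hn R R' U h0t) :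
    splitRatio n hn P P' Q h0p < splitRatio n hn R R' U h0t := by
  obtain ⟨m, -, hpre, hlt⟩ := hlex
  obtain ⟨hQ, hPP, -, -⟩ := hP
  have hh0t' : isH0 n hn P P' Q h0t := by rw [isH0, aList_congr hsum hq]; exact hh0t
  obtain rfl : h0t = h0p := isH0_unique hQ hPP hh0t' hh0p
  rw [splitRatio, splitRatio, ← hseq_congr hsum hq]
  exact tsum_mul_hseq_lt_of_lex hQ hh0p (fun _ => Nat.le_add_right _ _)
    (fun i => hsum _ ▸ Nat.le_add_right _ _) hpre hlt

/-- if `p, t ∈ I_n` satisfy `p_i + p_i' = t_i + t_i'` and `q_i = u_i` for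
all `i`, and `(p_n, …, p_1)` strictly precedes `(t_n, …, t_1)` lexicographically,
then `s_p < s_t`.  (For `i < n`, position `i` of `(p_n, …, p_1)` is `p` at index
`blk n hn i = ⟨n - 1 - i, _⟩`.) -/
theorem stmt11 (n : ℕ) (hn : 0 < n) (P P' Q R R' U : Fin n → ℕ)
    (hP : memI n P P' Q) (hT : memI n R R' U)
    (hsum : ∀ i, P i + P' i = R i + R' i) (hq : ∀ i, Q i = U i)
    (hlex : ∃ m : ℕ, m < n ∧ (∀ i, i < m → P (blk n hn i) = R (blk n hn i)) ∧
      P (blk n hn m) < R (blk n hn m))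
    (h0p h0t : ℝ) (hh0p : isH0 n hn P P' Q h0p) (hh0t : isH0 n hn R R' U h0t) :
    splitRatio n hn P P' Q h0p < splitRatio n hn R R' U h0t :=
  stmt11_general n hn P P' Q R R' U hP hsum hq hlex h0p h0t hh0p hh0t
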